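/- arXiv:2109.05624 — 6 statements merged into one kernel-verified Lean document; each statement's English description precedes it below -/
import Mathlib

section
/- For integers 0 ≤ a ≤ b ≤ n with b − a < n, and 0 ≤ M < N, the difference of interval probabilities satisfies (N − M)·(P_{M+1}([a,b]) − P_M([a,b])) = (n − (a−1))·P_M(a−1) − (n − b)·P_M(b), where P_M([a,b]) = Σ_{x=a}^{b} P_M(x) and P_M(a−1) is interpreted as 0 when a = 0. -/
def hyperPMF (M n N x : ℕ) : ℚ :=
  if x ≤ n then (M.choose x * (N - M).choose (n - x) : ℚ) / (N.choose n) else 0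

/-!
By Pascal's rule `C(M+1, x) = C(M, x) + C(M, x-1)` and the absorption identities for binomial
coefficients, `(N - M) (P_{M+1}(x) - P_M(x)) = F(x) - F(x+1)` with
`F(x) = (n - (x-1)) P_M(x-1)` and `F(0) = 0`; summing over `[a, b]` telescopes.
-/

open Finset

namespace Nat

variable {R : Type*} [CommRing R]

theorem cast_choose_mul_succ (m k : ℕ) :
    (m.choose k : R) * (m + 1) = (m + 1).choose k * ((m : R) + 1 - k) := by
  rcases le_or_gt k (m + 1) with hk | hk
  · have := congrArg (Nat.cast : ℕ → R) (choose_mul_succ_eq m k)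
    push_cast [Nat.cast_sub hk] at this
    exact this
  · rw [choose_eq_zero_of_lt hk, choose_eq_zero_of_lt (by omega)]
    simp

theorem cast_choose_succ_right_mul (m k : ℕ) :
    (m.choose (k + 1) : R) * (k + 1) = m.choose k * ((m : R) - k) := by
  rcases le_or_gt k m with hk | hk
  · have := congrArg (Nat.cast : ℕ → R) (choose_succ_right_eq m k)
    push_cast [Nat.cast_sub hk] at this
    exact this
  · rw [choose_eq_zero_of_lt hk, choose_eq_zero_of_lt (by omega)]
    simp

theorem cast_choose_mul_choose_step (M K x k : ℕ) :
    ((K : R) + 1) * ((M + 1).choose (x + 1) * K.choose k - M.choose (x + 1) * (K + 1).choose k)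
      = ((k : R) + 1) * (M.choose x * (K + 1).choose (k + 1))
        - k * (M.choose (x + 1) * (K + 1).choose k) := by
  have pascal : ((M + 1).choose (x + 1) : R) = M.choose x + M.choose (x + 1) := by
    rw [choose_succ_succ', cast_add]
  have hA := cast_choose_mul_succ (R := R) K k
  have hB := cast_choose_succ_right_mul (R := R) (K + 1) k
  push_cast at hB
  rw [pascal]
  linear_combination (M.choose x + M.choose (x + 1) : R) * hA - (M.choose x : R) * hB

end Nat

section Hypergeometric

variable {M n N : ℕ}

theorem sub_mul_hyperPMF_succ_sub_zero (hMN : M < N) :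
    ((N : ℚ) - M) * (hyperPMF (M + 1) n N 0 - hyperPMF M n N 0) = -(n * hyperPMF M n N 0) := by
  obtain ⟨K, rfl⟩ : ∃ K, N = M + K + 1 := ⟨N - M - 1, by omega⟩
  have hN : M + K + 1 - M = K + 1 := by omega
  have hN' : M + K + 1 - (M + 1) = K := by omega
  simp only [hyperPMF, zero_le, if_true, Nat.choose_zero_right, Nat.sub_zero, hN, hN']
  push_cast
  linear_combination (Nat.cast_choose_mul_succ (R := ℚ) K n) / ((M + K + 1).choose n : ℚ)

theorem sub_mul_hyperPMF_succ_sub_succ (hMN : M < N) (x : ℕ) :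
    ((N : ℚ) - M) * (hyperPMF (M + 1) n N (x + 1) - hyperPMF M n N (x + 1))
      = ((n : ℚ) - x) * hyperPMF M n N x - ((n : ℚ) - (x + 1)) * hyperPMF M n N (x + 1) := by
  rcases le_or_gt (x + 1) n with hx | hx
  · obtain ⟨K, rfl⟩ : ∃ K, N = M + K + 1 := ⟨N - M - 1, by omega⟩
    obtain ⟨k, rfl⟩ : ∃ k, n = x + 1 + k := ⟨n - (x + 1), by omega⟩
    have hN : M + K + 1 - M = K + 1 := by omega
    have hN' : M + K + 1 - (M + 1) = K := by omega
    have hk : x + 1 + k - x = k + 1 := by omega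
    simp only [hyperPMF, hx, (by omega : x ≤ x + 1 + k), if_true, hN, hN', hk,
      Nat.add_sub_cancel_left]
    push_cast
    linear_combination
      (Nat.cast_choose_mul_choose_step (R := ℚ) M K x k) / ((M + K + 1).choose (x + 1 + k) : ℚ)
  · have hzero (P : ℕ) : hyperPMF P n N (x + 1) = 0 := if_neg (by omega)
    rw [hzero, hzero, sub_self, mul_zero, mul_zero, sub_zero]
    rcases (by omega : x = n ∨ n < x) with rfl | hnx
    · rw [sub_self, zero_mul]
    · rw [hyperPMF, if_neg (by omega), mul_zero]

def hyperFlux (M n N x : ℕ) : ℚ :=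
  ((n : ℚ) - ((x : ℚ) - 1)) * (if x = 0 then 0 else hyperPMF M n N (x - 1))

theorem sub_mul_hyperPMF_succ_sub (hMN : M < N) (x : ℕ) :
    ((N : ℚ) - M) * (hyperPMF (M + 1) n N x - hyperPMF M n N x)
      = hyperFlux M n N x - hyperFlux M n N (x + 1) := by
  cases x with
  | zero =>
    simpa [hyperFlux] using sub_mul_hyperPMF_succ_sub_zero hMN
  | succ x =>
    simpa [hyperFlux] using sub_mul_hyperPMF_succ_sub_succ hMN x

end Hypergeometric

theorem hyperPMF_interval_diff_general (n N M a b : ℕ)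
    (hab : a ≤ b) (hMN : M < N) :
    ((N : ℚ) - M) *
        ((∑ x ∈ Finset.Icc a b, hyperPMF (M + 1) n N x)
          - ∑ x ∈ Finset.Icc a b, hyperPMF M n N x)
      = ((n : ℚ) - ((a : ℚ) - 1)) * (if a = 0 then 0 else hyperPMF M n N (a - 1))
          - ((n : ℚ) - b) * hyperPMF M n N b := by
  calc ((N : ℚ) - M) * ((∑ x ∈ Icc a b, hyperPMF (M + 1) n N x)
          - ∑ x ∈ Icc a b, hyperPMF M n N x)
      = ∑ x ∈ Icc a b, (hyperFlux M n N x - hyperFlux M n N (x + 1)) := by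
        rw [← sum_sub_distrib, mul_sum]
        exact sum_congr rfl fun x _ => sub_mul_hyperPMF_succ_sub hMN x
    _ = hyperFlux M n N a - hyperFlux M n N (b + 1) := by
        rw [← neg_sub, ← sum_Icc_sub hab, ← sum_neg_distrib]
        simp only [neg_sub]
    _ = _ := by simp [hyperFlux]

/-- The identity (N − M)(P_{M+1}([a,b]) − P_M([a,b]))
= (n − (a−1)) P_M(a−1) − (n − b) P_M(b), with P_M(a−1) read as 0 when a = 0. -/
theorem hyperPMF_interval_diff (n N M a b : ℕ) (hn : 0 < n) (hnN : n ≤ N)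
    (hab : a ≤ b) (hbn : b ≤ n) (hlen : b - a < n) (hMN : M < N) :
    ((N : ℚ) - M) *
        ((∑ x ∈ Finset.Icc a b, hyperPMF (M + 1) n N x)
          - ∑ x ∈ Finset.Icc a b, hyperPMF M n N x)
      = ((n : ℚ) - ((a : ℚ) - 1)) * (if a = 0 then 0 else hyperPMF M n N (a - 1))
          - ((n : ℚ) - b) * hyperPMF M n N b :=
  hyperPMF_interval_diff_general n N M a b hab hMN
end

section
/- For fixed 0 ≤ a ≤ b ≤ n with b − a < n, the sequence M ↦ P_M([a,b]) is unimodal in M: there is an integer M(a,b) in [0, N] such that P_M([a,b]) is nondecreasing for M ≤ M(a,b) and nonincreasing for M ≥ M(a,b). Moreover, if a = 0 one may take M(a,b) = 0, and if b = n one may take M(a,b) = N. -/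
/-!
Write `S(M) = ∑_{x=a}^{b} C(M,x) C(N-M,n-x)` for the numerator of `P_M([a,b])`. Moving one point
of the `N`-set into the marked part changes `S` only through the `n`-sets containing that point
whose marked count crosses an end of `[a,b]`: by Pascal's rule, telescoped over `x`,
`S(M+1) - S(M) = u(M) - v(M)` with `u(M) = C(M,a-1) C(N-M-1,n-a)` (entering from below; absent if
`a = 0`) and `v(M) = C(M,b) C(N-M-1,n-b-1)` (leaving above; absent if `b = n`). Since
`j ↦ C(m+1,j) / C(m,j)` is nondecreasing, `u(M) / v(M)` is nonincreasing in `M`, so `v - u`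
changes sign at most once, from negative to positive; `M(a,b)` is the first `M` with `u(M) < v(M)`.
-/

open Finset

theorem choose_succ_mul_choose_le_choose_mul_choose_succ (m : ℕ) {j k : ℕ} (hjk : j ≤ k) :
    (m + 1).choose j * m.choose k ≤ m.choose j * (m + 1).choose k := by
  rcases lt_or_ge m k with hmk | hkm
  · simp [Nat.choose_eq_zero_of_lt hmk]
  have hj := Nat.choose_mul_succ_eq m j
  have hk := Nat.choose_mul_succ_eq m k
  refine Nat.le_of_mul_le_mul_right (c := (m + 1 - j) * (m + 1 - k)) ?_
    (Nat.mul_pos (by omega) (by omega))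
  calc (m + 1).choose j * m.choose k * ((m + 1 - j) * (m + 1 - k))
      = (m + 1).choose j * (m + 1 - j) * m.choose k * (m + 1 - k) := by ring
    _ = m.choose j * (m + 1) * m.choose k * (m + 1 - k) := by rw [hj]
    _ ≤ m.choose j * (m + 1) * m.choose k * (m + 1 - j) := by gcongr
    _ = m.choose j * ((m + 1).choose k * (m + 1 - k)) * (m + 1 - j) := by rw [← hk]; ring
    _ = m.choose j * (m + 1).choose k * ((m + 1 - j) * (m + 1 - k)) := by ring

/-- The number of `n`-subsets of a set of `M + 1 + K` points that contain a distinguished point `p`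
and meet the `M`-part in `x - 1` points (`0` if `x = 0` or `x > n`): these are the sets whose
count in the marked part goes from `x - 1` to `x` when `p` is moved from the `K`-part into it. -/
def pivotCount (M K n x : ℕ) : ℕ :=
  if 0 < x ∧ x ≤ n then M.choose (x - 1) * K.choose (n - x) else 0

theorem succ_choose_mul_choose_add_pivotCount {M K n x : ℕ} (hx : x ≤ n) :
    (M + 1).choose x * K.choose (n - x) + pivotCount M K n (x + 1)
      = M.choose x * (K + 1).choose (n - x) + pivotCount M K n x := by
  obtain ⟨j, rfl⟩ := Nat.exists_eq_add_of_le hx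
  simp only [pivotCount, Nat.add_sub_cancel_left, Nat.add_sub_add_left]
  rcases x with _ | x <;> rcases j with _ | j <;> simp [Nat.choose_succ_succ'] <;> ring

theorem sum_Ico_succ_choose_mul_choose_add_pivotCount (M K : ℕ) {n a c : ℕ} (hac : a ≤ c)
    (hcn : c ≤ n + 1) :
    ∑ x ∈ Ico a c, (M + 1).choose x * K.choose (n - x) + pivotCount M K n c
      = ∑ x ∈ Ico a c, M.choose x * (K + 1).choose (n - x) + pivotCount M K n a := by
  induction c, hac using Nat.le_induction with
  | base => simp
  | succ c hac ih =>
    rw [sum_Ico_succ_top hac, sum_Ico_succ_top hac, add_assoc,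
      succ_choose_mul_choose_add_pivotCount (by omega)]
    linarith [ih (by omega)]

theorem pivotCount_eq_zero_of_lt {M K n x : ℕ} (h : K < n - x) : pivotCount M K n x = 0 := by
  simp [pivotCount, Nat.choose_eq_zero_of_lt h]

theorem pivotCount_succ_mul_pivotCount_le {M K n a b : ℕ} (hab : a ≤ b + 1) :
    pivotCount (M + 1) K n a * pivotCount M (K + 1) n (b + 1)
      ≤ pivotCount M (K + 1) n a * pivotCount (M + 1) K n (b + 1) := by
  simp only [pivotCount, Nat.add_sub_cancel]
  split_ifs
  · calc (M + 1).choose (a - 1) * K.choose (n - a) * (M.choose b * (K + 1).choose (n - (b + 1)))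
        = ((M + 1).choose (a - 1) * M.choose b) *
            ((K + 1).choose (n - (b + 1)) * K.choose (n - a)) := by ring
      _ ≤ (M.choose (a - 1) * (M + 1).choose b) *
            (K.choose (n - (b + 1)) * (K + 1).choose (n - a)) :=
          Nat.mul_le_mul (choose_succ_mul_choose_le_choose_mul_choose_succ M (by omega))
            (choose_succ_mul_choose_le_choose_mul_choose_succ K (by omega))
      _ = _ := by ring
  all_goals simp

theorem pivotCount_succ_lt_or_lt {M K n a b : ℕ} (hab : a ≤ b + 1)
    (h : pivotCount M (K + 1) n a < pivotCount M (K + 1) n (b + 1)) :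
    pivotCount (M + 1) K n a < pivotCount (M + 1) K n (b + 1) ∨ K < n - a := by
  rcases Nat.eq_zero_or_pos (pivotCount (M + 1) K n (b + 1)) with hv | hv
  · right
    have hpos : 0 < pivotCount M (K + 1) n (b + 1) := (Nat.zero_le _).trans_lt h
    simp only [pivotCount, Nat.add_sub_cancel] at hpos hv
    split_ifs at hpos hv with hb
    · have hbM : b ≤ M := by
        by_contra hMb
        simp [Nat.choose_eq_zero_of_lt (not_le.mp hMb)] at hpos
      rw [Nat.mul_eq_zero, Nat.choose_eq_zero_iff, Nat.choose_eq_zero_iff] at hv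
      omega
    · simp at hpos
  · left
    refine Nat.lt_of_mul_lt_mul_right (a := pivotCount M (K + 1) n (b + 1)) ?_
    calc pivotCount (M + 1) K n a * pivotCount M (K + 1) n (b + 1)
        ≤ pivotCount M (K + 1) n a * pivotCount (M + 1) K n (b + 1) :=
          pivotCount_succ_mul_pivotCount_le hab
      _ < pivotCount M (K + 1) n (b + 1) * pivotCount (M + 1) K n (b + 1) := by gcongr
      _ = _ := mul_comm _ _

theorem pivotCount_le_pivotCount_of_lt_of_le {N n a b T m : ℕ} (hab : a ≤ b + 1)
    (hT : pivotCount T (N - T - 1) n a < pivotCount T (N - T - 1) n (b + 1))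
    (hTm : T ≤ m) (hmN : m < N) :
    pivotCount m (N - m - 1) n a ≤ pivotCount m (N - m - 1) n (b + 1) := by
  -- `u < v` persists until `v` vanishes, and from then on `N - m - 1 < n - a` forces `u = 0`.
  have key : pivotCount m (N - m - 1) n a < pivotCount m (N - m - 1) n (b + 1)
      ∨ N - m - 1 < n - a := by
    induction m, hTm using Nat.le_induction with
    | base => exact Or.inl hT
    | succ m _ ih =>
      obtain ⟨K, hK, hK'⟩ : ∃ K, N - m - 1 = K + 1 ∧ N - (m + 1) - 1 = K :=
        ⟨N - m - 2, by omega, by omega⟩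
      rw [hK']
      rcases ih (by omega) with h | h
      · rw [hK] at h
        exact pivotCount_succ_lt_or_lt hab h
      · right; omega
  rcases key with h | h
  · exact h.le
  · simp [pivotCount_eq_zero_of_lt h]

theorem exists_pivotCount_threshold (N n a b : ℕ) (hab : a ≤ b + 1) :
    ∃ T ≤ N,
      (∀ m < T, pivotCount m (N - m - 1) n (b + 1) ≤ pivotCount m (N - m - 1) n a) ∧
      ∀ m, T ≤ m → m < N →
        pivotCount m (N - m - 1) n a ≤ pivotCount m (N - m - 1) n (b + 1) := by
  have hex : ∃ m, m = N ∨ pivotCount m (N - m - 1) n a < pivotCount m (N - m - 1) n (b + 1) :=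
    ⟨N, Or.inl rfl⟩
  refine ⟨Nat.find hex, Nat.find_min' hex (Or.inl rfl),
    fun m hm => not_lt.mp fun h => Nat.find_min hex hm (Or.inr h), fun m hTm hmN => ?_⟩
  rcases Nat.find_spec hex with hT | hT
  · omega
  · exact pivotCount_le_pivotCount_of_lt_of_le hab hT hTm hmN

theorem monotoneOn_antitoneOn_of_add_eq_add {S u v : ℕ → ℕ} {N T : ℕ}
    (hS : ∀ m < N, S (m + 1) + v m = S m + u m) (hTN : T ≤ N)
    (hup : ∀ m < T, v m ≤ u m) (hdown : ∀ m, T ≤ m → m < N → u m ≤ v m) :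
    MonotoneOn S (Set.Iic T) ∧ AntitoneOn S (Set.Icc T N) := by
  constructor
  · refine monotoneOn_of_le_succ Set.ordConnected_Iic fun m _ _ hm => ?_
    rw [Order.succ_eq_add_one, Set.mem_Iic] at *
    have := hS m (by omega)
    have := hup m (by omega)
    omega
  · refine antitoneOn_of_succ_le Set.ordConnected_Icc fun m _ hm hm1 => ?_
    rw [Order.succ_eq_add_one, Set.mem_Icc] at *
    have := hS m (by omega)
    have := hdown m hm.1 (by omega)
    omega

def intervalCount (n N a b M : ℕ) : ℕ :=
  ∑ x ∈ Icc a b, M.choose x * (N - M).choose (n - x)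

theorem intervalCount_succ_add_pivotCount {n N a b M : ℕ} (hab : a ≤ b + 1) (hbn : b ≤ n)
    (hM : M < N) :
    intervalCount n N a b (M + 1) + pivotCount M (N - M - 1) n (b + 1)
      = intervalCount n N a b M + pivotCount M (N - M - 1) n a := by
  obtain ⟨K, hK, hK'⟩ : ∃ K, N - (M + 1) = K ∧ N - M = K + 1 :=
    ⟨N - M - 1, by omega, by omega⟩
  rw [intervalCount, intervalCount, ← Ico_add_one_right_eq_Icc, hK, hK', Nat.add_sub_cancel]
  exact sum_Ico_succ_choose_mul_choose_add_pivotCount M K hab (by omega)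

theorem sum_hyperPMF_eq_intervalCount_div {n N a b : ℕ} (hbn : b ≤ n) (M : ℕ) :
    ∑ x ∈ Icc a b, hyperPMF M n N x = (intervalCount n N a b M : ℚ) / N.choose n := by
  rw [intervalCount, Nat.cast_sum, sum_div]
  refine sum_congr rfl fun x hx => ?_
  rw [hyperPMF, if_pos ((mem_Icc.mp hx).2.trans hbn)]
  rw [Nat.cast_mul]

theorem hyperPMF_interval_unimodal_in_M_general (n N a b : ℕ)
    (hab : a ≤ b) (hbn : b ≤ n) (hlen : b - a < n) :
    ∃ Mab : ℕ, Mab ≤ N ∧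
      (∀ M1 M2 : ℕ, M1 ≤ M2 → M2 ≤ Mab →
        (∑ x ∈ Finset.Icc a b, hyperPMF M1 n N x)
          ≤ ∑ x ∈ Finset.Icc a b, hyperPMF M2 n N x) ∧
      (∀ M1 M2 : ℕ, Mab ≤ M1 → M1 ≤ M2 → M2 ≤ N →
        (∑ x ∈ Finset.Icc a b, hyperPMF M2 n N x)
          ≤ ∑ x ∈ Finset.Icc a b, hyperPMF M1 n N x) ∧
      (a = 0 → Mab = 0) ∧ (b = n → Mab = N) := by
  obtain ⟨T, hTN, hup, hdown, hT0, hTN'⟩ : ∃ T ≤ N,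
      (∀ m < T, pivotCount m (N - m - 1) n (b + 1) ≤ pivotCount m (N - m - 1) n a) ∧
      (∀ m, T ≤ m → m < N →
        pivotCount m (N - m - 1) n a ≤ pivotCount m (N - m - 1) n (b + 1)) ∧
      (a = 0 → T = 0) ∧ (b = n → T = N) := by
    by_cases ha : a = 0
    · exact ⟨0, Nat.zero_le N, by simp, fun m _ _ => by simp [ha, pivotCount], fun _ => rfl,
        by omega⟩
    by_cases hb : b = n
    · exact ⟨N, le_rfl, fun m _ => by simp [hb, pivotCount], by omega, by omega, fun _ => rfl⟩
    obtain ⟨T, hTN, hup, hdown⟩ := exists_pivotCount_threshold N n a b (by omega)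
    exact ⟨T, hTN, hup, hdown, by omega, by omega⟩
  obtain ⟨hmono, hanti⟩ := monotoneOn_antitoneOn_of_add_eq_add
    (fun m hm => intervalCount_succ_add_pivotCount (by omega) hbn hm) hTN hup hdown
  simp only [sum_hyperPMF_eq_intervalCount_div hbn]
  refine ⟨T, hTN, fun M1 M2 h12 h2 => ?_, fun M1 M2 h1 h12 h2 => ?_, hT0, hTN'⟩
  · gcongr
    exact hmono (Set.mem_Iic.mpr (h12.trans h2)) h2 h12
  · gcongr
    exact hanti ⟨h1, h12.trans h2⟩ ⟨h1.trans h12, h2⟩ h12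

/-- Unimodality of M ↦ P_M([a,b]): there is M(a,b) ∈ [0,N] such that the interval
probability is nondecreasing up to M(a,b) and nonincreasing after it; one may take
M(a,b) = 0 when a = 0 and M(a,b) = N when b = n. -/
theorem hyperPMF_interval_unimodal_in_M (n N a b : ℕ) (hn : 0 < n) (hnN : n ≤ N)
    (hab : a ≤ b) (hbn : b ≤ n) (hlen : b - a < n) :
    ∃ Mab : ℕ, Mab ≤ N ∧
      (∀ M1 M2 : ℕ, M1 ≤ M2 → M2 ≤ Mab →
        (∑ x ∈ Finset.Icc a b, hyperPMF M1 n N x)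
          ≤ ∑ x ∈ Finset.Icc a b, hyperPMF M2 n N x) ∧
      (∀ M1 M2 : ℕ, Mab ≤ M1 → M1 ≤ M2 → M2 ≤ N →
        (∑ x ∈ Finset.Icc a b, hyperPMF M2 n N x)
          ≤ ∑ x ∈ Finset.Icc a b, hyperPMF M1 n N x) ∧
      (a = 0 → Mab = 0) ∧ (b = n → Mab = N) :=
  hyperPMF_interval_unimodal_in_M_general n N a b hab hbn hlen
end

section
/- Every P_M-maximizing set is an interval of consecutive integers contained in [x_min, x_max]. -/
/-!
The weights `w x = C(M, x) * C(N - M, n - x)` satisfy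
`w (x + 1) * (x + 1) * (N - M - n + x + 1) = w x * (M - x) * (n - x)`, so on the support the ratio
`w (x + 1) / w x` strictly decreases: once `w` stops increasing it strictly decreases. Hence at a
point strictly between two points of the support the pmf exceeds the smaller of their values. If a
maximizing set missed such a point, exchanging it for the element of smaller probability would
strictly increase the total probability.
-/

open Finset

theorem Finset.apply_le_apply_of_sum_maximal {ι M : Type*} [DecidableEq ι] [AddCommMonoid M]
    [PartialOrder M] [IsOrderedCancelAddMonoid M] {f : ι → M} {U S : Finset ι} (hSU : S ⊆ U)
    (hmax : ∀ T ⊆ U, #T = #S → ∑ x ∈ T, f x ≤ ∑ x ∈ S, f x) {e x : ι} (he : e ∈ S)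
    (hx : x ∈ U) (hxS : x ∉ S) : f x ≤ f e := by
  have hxS' : x ∉ S.erase e := fun h => hxS (mem_of_mem_erase h)
  have hswap := hmax (insert x (S.erase e)) (insert_subset hx ((erase_subset e S).trans hSU))
    (by rw [card_insert_of_notMem hxS', card_erase_add_one he])
  rw [sum_insert hxS', ← add_sum_erase S f he] at hswap
  exact le_of_add_le_add_right hswap

theorem Finset.Nonempty.eq_Icc_min'_max' {α : Type*} [LinearOrder α] [LocallyFiniteOrder α]
    {s : Finset α} (hs : s.Nonempty) (h : (s : Set α).OrdConnected) :
    s = Icc (s.min' hs) (s.max' hs) := by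
  ext x
  rw [mem_Icc]
  exact ⟨fun hx => ⟨min'_le s x hx, le_max' s x hx⟩,
    fun hx => h.out (min'_mem s hs) (max'_mem s hs) hx⟩

theorem min_lt_of_nonascent_persists {α : Type*} [LinearOrder α] {f : ℕ → α} {a b c : ℕ}
    (hstep : ∀ j, a ≤ j → j + 2 ≤ b → f (j + 1) ≤ f j → f (j + 2) < f (j + 1))
    (hac : a < c) (hcb : c < b) : min (f a) (f b) < f c := by
  by_cases hasc : ∀ j, a ≤ j → j < c → f j < f (j + 1)
  · have hmono : StrictMonoOn f (Set.Icc a c) := strictMonoOn_of_lt_add_one Set.ordConnected_Icc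
      fun j _ hj hj1 => hasc j hj.1 (Nat.lt_of_succ_le hj1.2)
    exact min_lt_of_left_lt (hmono ⟨le_rfl, hac.le⟩ ⟨hac.le, le_rfl⟩ hac)
  push Not at hasc
  obtain ⟨i, hai, hic, hi⟩ := hasc
  have hdesc : ∀ j, i < j → j < b → f (j + 1) < f j := by
    intro j hij
    induction j, hij using Nat.le_induction with
    | base => exact fun hjb => hstep i hai (by omega) hi
    | succ j hij ih => exact fun hjb => hstep j (by omega) (by omega) (ih (by omega)).le
  have hanti : StrictAntiOn f (Set.Icc c b) := strictAntiOn_of_add_one_lt Set.ordConnected_Icc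
    fun j _ hj hj1 => hdesc j (hic.trans_le hj.1) (Nat.lt_of_succ_le hj1.2)
  exact min_lt_of_right_lt (hanti ⟨le_rfl, hcb.le⟩ ⟨hcb.le, le_rfl⟩ hcb)

def hypergeomWeight (M n N x : ℕ) : ℕ := M.choose x * (N - M).choose (n - x)

section Hypergeometric

variable {M n N : ℕ}

theorem hypergeomWeight_pos_iff {x : ℕ} :
    0 < hypergeomWeight M n N x ↔ x ≤ M ∧ n - x ≤ N - M := by
  simp [hypergeomWeight, Nat.pos_iff_ne_zero, Nat.choose_ne_zero_iff]

theorem hypergeomWeight_succ_mul {j : ℕ} (hj : j < n) :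
    hypergeomWeight M n N (j + 1) * ((j + 1) * (N - M - (n - (j + 1)))) =
      hypergeomWeight M n N j * ((M - j) * (n - j)) := by
  have hM := Nat.choose_succ_right_eq M j
  have hK := Nat.choose_succ_right_eq (N - M) (n - (j + 1))
  simp only [hypergeomWeight]
  rw [show n - j = n - (j + 1) + 1 by omega]
  calc _ = (M.choose (j + 1) * (j + 1)) *
          ((N - M).choose (n - (j + 1)) * (N - M - (n - (j + 1)))) := by ring
    _ = (M.choose j * (M - j)) * ((N - M).choose (n - (j + 1) + 1) * (n - (j + 1) + 1)) := by
        rw [hM, hK]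
    _ = _ := by ring

theorem hypergeomWeight_add_two_lt_of_add_one_le {j : ℕ} (hjK : n - j ≤ N - M) (hjM : j + 1 ≤ M)
    (hjn : j + 2 ≤ n) (hle : hypergeomWeight M n N (j + 1) ≤ hypergeomWeight M n N j) :
    hypergeomWeight M n N (j + 2) < hypergeomWeight M n N (j + 1) := by
  set w := hypergeomWeight M n N
  set up : ℕ → ℕ := fun i => (M - i) * (n - i)
  set down : ℕ → ℕ := fun i => (i + 1) * (N - M - (n - (i + 1)))
  have hw₀ : 0 < w j := hypergeomWeight_pos_iff.2 ⟨by omega, hjK⟩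
  have hw₁ : 0 < w (j + 1) := hypergeomWeight_pos_iff.2 ⟨hjM, by omega⟩
  have hud : up j ≤ down j := by
    refine Nat.le_of_mul_le_mul_left ?_ hw₀
    calc w j * up j = w (j + 1) * down j := (hypergeomWeight_succ_mul (by omega)).symm
      _ ≤ w j * down j := Nat.mul_le_mul_right _ hle
  have hup : up (j + 1) ≤ up j := Nat.mul_le_mul (by omega) (by omega)
  have hdown : down j < down (j + 1) := Nat.mul_lt_mul_of_lt_of_le (by omega) (by omega) (by omega)
  refine Nat.lt_of_mul_lt_mul_right (a := down (j + 1)) ?_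
  calc w (j + 2) * down (j + 1) = w (j + 1) * up (j + 1) := hypergeomWeight_succ_mul (by omega)
    _ ≤ w (j + 1) * down j := Nat.mul_le_mul_left _ (hup.trans hud)
    _ < w (j + 1) * down (j + 1) := Nat.mul_lt_mul_of_pos_left hdown hw₁

theorem hyperPMF_eq_div {x : ℕ} (hx : x ≤ n) :
    hyperPMF M n N x = hypergeomWeight M n N x / N.choose n := by
  simp [hyperPMF, hypergeomWeight, hx]

theorem hyperPMF_pos_iff {x : ℕ} :
    0 < hyperPMF M n N x ↔ n ≤ N ∧ x ≤ n ∧ x ≤ M ∧ n - x ≤ N - M := by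
  by_cases hx : x ≤ n
  · rw [hyperPMF_eq_div hx, ← hypergeomWeight_pos_iff, div_pos_iff]
    simp [hx, Nat.pos_iff_ne_zero, Nat.choose_ne_zero_iff, and_comm]
  · simp [hyperPMF, hx]

theorem hyperPMF_support_ordConnected : Set.OrdConnected {x | 0 < hyperPMF M n N x} :=
  ⟨fun a ha b hb x hx => by
    simp only [Set.mem_ofPred_eq, hyperPMF_pos_iff] at ha hb ⊢
    simp only [Set.mem_Icc] at hx
    omega⟩

theorem hyperPMF_add_two_lt_of_add_one_le {j : ℕ} (hj : 0 < hyperPMF M n N j)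
    (hj₂ : 0 < hyperPMF M n N (j + 2)) (hle : hyperPMF M n N (j + 1) ≤ hyperPMF M n N j) :
    hyperPMF M n N (j + 2) < hyperPMF M n N (j + 1) := by
  obtain ⟨hnN, -, -, hjK⟩ := hyperPMF_pos_iff.1 hj
  obtain ⟨-, hjn, hjM, -⟩ := hyperPMF_pos_iff.1 hj₂
  have hC : (0 : ℚ) < N.choose n := by exact_mod_cast Nat.choose_pos hnN
  rw [hyperPMF_eq_div (by omega), hyperPMF_eq_div (by omega), div_le_div_iff_of_pos_right hC,
    Nat.cast_le] at hle
  rw [hyperPMF_eq_div hjn, hyperPMF_eq_div (by omega), div_lt_div_iff_of_pos_right hC, Nat.cast_lt]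
  exact hypergeomWeight_add_two_lt_of_add_one_le hjK (by omega) hjn hle

end Hypergeometric

theorem hyperPMF_maximizing_isInterval_general (n N M : ℕ)
    (hMN : M ≤ N) (S : Finset ℕ) (hSn : S ⊆ Finset.range (n + 1))
    (hpos : ∀ x ∈ S, 0 < hyperPMF M n N x)
    (hmax : ∀ T : Finset ℕ, T ⊆ Finset.range (n + 1) → T.card = S.card →
      (∑ x ∈ T, hyperPMF M n N x) ≤ ∑ x ∈ S, hyperPMF M n N x) :
    (∃ a b : ℕ, S = Finset.Icc a b) ∧ S ⊆ Finset.Icc (M + n - N) (min n M) := by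
  refine ⟨?_, fun x hx => ?_⟩
  · rcases S.eq_empty_or_nonempty with rfl | hS
    · exact ⟨1, 0, by simp⟩
    refine ⟨_, _, hS.eq_Icc_min'_max' (Set.ordConnected_of_Ioo fun a ha b hb _ c hc => ?_)⟩
    by_contra hcS
    have hsupp := hyperPMF_support_ordConnected (M := M) (n := n) (N := N)
    have hlt : min (hyperPMF M n N a) (hyperPMF M n N b) < hyperPMF M n N c :=
      min_lt_of_nonascent_persists (fun j haj hjb => hyperPMF_add_two_lt_of_add_one_le
        (hsupp.out (hpos a ha) (hpos b hb) ⟨haj, by omega⟩)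
        (hsupp.out (hpos a ha) (hpos b hb) ⟨by omega, hjb⟩)) hc.1 hc.2
    have hcU : c ∈ range (n + 1) := mem_range.2 (hc.2.trans (mem_range.1 (hSn hb)))
    rcases min_lt_iff.1 hlt with h | h
    · exact (apply_le_apply_of_sum_maximal hSn hmax ha hcU hcS).not_gt h
    · exact (apply_le_apply_of_sum_maximal hSn hmax hb hcU hcS).not_gt h
  · obtain ⟨-, hxn, hxM, hxK⟩ := hyperPMF_pos_iff.1 (hpos x hx)
    rw [mem_Icc]
    omega

/-- Every P_M-maximizing set is an interval of consecutive integers contained in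
[x_min, x_max]. -/
theorem hyperPMF_maximizing_isInterval (n N M : ℕ) (hn : 0 < n) (hnN : n ≤ N)
    (hMN : M ≤ N) (S : Finset ℕ) (hSn : S ⊆ Finset.range (n + 1))
    (hpos : ∀ x ∈ S, 0 < hyperPMF M n N x)
    (hmax : ∀ T : Finset ℕ, T ⊆ Finset.range (n + 1) → T.card = S.card →
      (∑ x ∈ T, hyperPMF M n N x) ≤ ∑ x ∈ S, hyperPMF M n N x) :
    (∃ a b : ℕ, S = Finset.Icc a b) ∧ S ⊆ Finset.Icc (M + n - N) (min n M) :=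
  hyperPMF_maximizing_isInterval_general n N M hMN S hSn hpos hmax
end

section
/- Let {[a_M, b_M] : M ∈ M} be α max optimal acceptance intervals for a set M of parameter values. Then the reflected intervals [n − b_{N−M}, n − a_{N−M}], indexed by M in {N − M' : M' ∈ M}, are α max optimal for that reflected index set. -/
/-- The interval [a,b] ⊆ {0,…,n} is α max optimal for M: it is a level-α acceptance
interval of minimal cardinality, all of whose points have positive P_M-probability,
maximizing P_M-probability among subsets of the same cardinality. -/
def AlphaMaxOpt (n N : ℕ) (α : ℚ) (M a b : ℕ) : Prop :=
  a ≤ b ∧ b ≤ n ∧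
    (1 - α ≤ ∑ x ∈ Finset.Icc a b, hyperPMF M n N x) ∧
    (∀ T : Finset ℕ, T ⊆ Finset.range (n + 1) → T.card < b - a + 1 →
      (∑ x ∈ T, hyperPMF M n N x) < 1 - α) ∧
    (∀ x ∈ Finset.Icc a b, 0 < hyperPMF M n N x) ∧
    (∀ T : Finset ℕ, T ⊆ Finset.range (n + 1) → T.card = b - a + 1 →
      (∑ x ∈ T, hyperPMF M n N x) ≤ ∑ x ∈ Finset.Icc a b, hyperPMF M n N x)

open Finset

/-! The reflection `x ↦ n - x` is an involution of `{0, …, n}` that carries `P_{N-M}` to `P_M`.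
It therefore preserves cardinalities of subsets and transports probabilities, so each of the
defining conditions of α max optimality for `[a, b]` under `P_M` turns into the same condition
for `[n - b, n - a]` under `P_{N-M}`. -/

lemma hyperPMF_sub_self {M n N x : ℕ} (hM : M ≤ N) (hx : x ≤ n) :
    hyperPMF (N - M) n N x = hyperPMF M n N (n - x) := by
  simp only [hyperPMF, if_pos hx, if_pos (Nat.sub_le n x), Nat.sub_sub_self hM,
    Nat.sub_sub_self hx]
  ring

lemma injOn_const_sub_range (n : ℕ) : Set.InjOn (n - ·) (range (n + 1) : Set ℕ) := by
  intro x hx y hy hxy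
  simp only [coe_range, Set.mem_Iio] at hx hy
  simp only at hxy
  omega

lemma image_const_sub_subset_range (n : ℕ) (T : Finset ℕ) :
    T.image (n - ·) ⊆ range (n + 1) := by
  intro y hy
  obtain ⟨x, -, rfl⟩ := mem_image.1 hy
  exact mem_range.2 (Nat.lt_succ_of_le (Nat.sub_le n x))

lemma Icc_subset_range {c d n : ℕ} (hd : d ≤ n) : Icc c d ⊆ range (n + 1) := fun x hx => by
  rw [mem_Icc] at hx
  exact mem_range.2 (by omega)

lemma image_const_sub_Icc {n c d : ℕ} (hcd : c ≤ d) (hd : d ≤ n) :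
    (Icc c d).image (n - ·) = Icc (n - d) (n - c) := by
  ext y
  simp only [mem_image, mem_Icc]
  constructor
  · rintro ⟨x, hx, rfl⟩
    omega
  · intro hy
    exact ⟨n - y, by omega, by omega⟩

lemma sum_hyperPMF_sub_self {M n N : ℕ} (hM : M ≤ N) {T : Finset ℕ}
    (hT : T ⊆ range (n + 1)) :
    ∑ x ∈ T, hyperPMF (N - M) n N x = ∑ x ∈ T.image (n - ·), hyperPMF M n N x := by
  rw [sum_image ((injOn_const_sub_range n).mono (coe_subset.2 hT))]
  exact sum_congr rfl fun x hx => hyperPMF_sub_self hM (Nat.lt_succ_iff.1 (mem_range.1 (hT hx)))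

lemma alphaMaxOpt_sub_self {n N M a b : ℕ} {α : ℚ} (hM : M ≤ N)
    (h : AlphaMaxOpt n N α M a b) : AlphaMaxOpt n N α (N - M) (n - b) (n - a) := by
  obtain ⟨hab, hbn, hcover, hmin, hpos, hmax⟩ := h
  have hcard : n - a - (n - b) + 1 = b - a + 1 := by omega
  have hsum_Icc : ∑ x ∈ Icc (n - b) (n - a), hyperPMF (N - M) n N x
      = ∑ x ∈ Icc a b, hyperPMF M n N x := by
    rw [sum_hyperPMF_sub_self hM (Icc_subset_range (Nat.sub_le n a)),
      image_const_sub_Icc (by omega) (Nat.sub_le n a), Nat.sub_sub_self (hab.trans hbn),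
      Nat.sub_sub_self hbn]
  refine ⟨by omega, Nat.sub_le n a, hsum_Icc ▸ hcover, ?_, ?_, ?_⟩
  · intro T hT hT_card
    rw [sum_hyperPMF_sub_self hM hT]
    exact hmin _ (image_const_sub_subset_range n T) (card_image_le.trans_lt (hcard ▸ hT_card))
  · intro x hx
    rw [mem_Icc] at hx
    rw [hyperPMF_sub_self hM (by omega)]
    exact hpos _ (mem_Icc.2 (by omega))
  · intro T hT hT_card
    rw [sum_hyperPMF_sub_self hM hT, hsum_Icc]
    refine hmax _ (image_const_sub_subset_range n T) ?_
    rw [card_image_of_injOn ((injOn_const_sub_range n).mono (coe_subset.2 hT)), hT_card, hcard]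

theorem alphaMaxOpt_reflect_general (n N : ℕ) (α : ℚ) (Mset : Set ℕ) (a b : ℕ → ℕ)
    (hopt : ∀ M ∈ Mset, M ≤ N ∧ AlphaMaxOpt n N α M (a M) (b M)) :
    ∀ M ∈ Mset, AlphaMaxOpt n N α (N - M) (n - b M) (n - a M) :=
  fun M hM => alphaMaxOpt_sub_self (hopt M hM).1 (hopt M hM).2

/-- Reflection preserves α max optimality: if {[a_M, b_M] : M ∈ 𝓜} is α max optimal,
then the reflected intervals [n − b_M, n − a_M] are α max optimal for the reflected
parameters N − M. -/
theorem alphaMaxOpt_reflect (n N : ℕ) (α : ℚ) (hn : 0 < n) (hnN : n ≤ N)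
    (hα0 : 0 < α) (hα1 : α < 1) (Mset : Set ℕ) (a b : ℕ → ℕ)
    (hopt : ∀ M ∈ Mset, M ≤ N ∧ AlphaMaxOpt n N α M (a M) (b M)) :
    ∀ M ∈ Mset, AlphaMaxOpt n N α (N - M) (n - b M) (n - a M) :=
  alphaMaxOpt_reflect_general n N α Mset a b hopt
end

section
/- Let {[a_M, b_M] : M ∈ [0, ⌊N/2⌋]} be α max optimal hypergeometric acceptance intervals. Then a_M + b_M ≤ n for every M < N/2. -/
/-- Monotone likelihood ratio inequality for binomial coefficients. -/
lemma choose_mul_choose_le (M K y : ℕ) (hMK : M ≤ K) :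
    ∀ x, y ≤ x → M.choose x * K.choose y ≤ M.choose y * K.choose x := by
  intro x hx
  induction x, hx using Nat.le_induction with
  | base => rw [Nat.mul_comm]
  | succ x hx ih =>
    have h1 : M.choose (x+1) * (x+1) = M.choose x * (M - x) := Nat.choose_succ_right_eq M x
    have h2 : K.choose (x+1) * (x+1) = K.choose x * (K - x) := Nat.choose_succ_right_eq K x
    have key : M.choose (x+1) * K.choose y * (x+1) ≤ M.choose y * K.choose (x+1) * (x+1) := by
      calc M.choose (x+1) * K.choose y * (x+1)
          = (M.choose (x+1) * (x+1)) * K.choose y := by ring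
        _ = M.choose x * (M - x) * K.choose y := by rw [h1]
        _ = (M.choose x * K.choose y) * (M - x) := by ring
        _ ≤ (M.choose y * K.choose x) * (M - x) := Nat.mul_le_mul_right _ ih
        _ ≤ (M.choose y * K.choose x) * (K - x) := by
            exact Nat.mul_le_mul_left _ (Nat.sub_le_sub_right hMK x)
        _ = M.choose y * (K.choose x * (K - x)) := by ring
        _ = M.choose y * (K.choose (x+1) * (x+1)) := by rw [h2]
        _ = M.choose y * K.choose (x+1) * (x+1) := by ring
    exact Nat.le_of_mul_le_mul_right key (Nat.succ_pos x)

/-- Strict version of the monotone likelihood ratio inequality. -/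
lemma choose_mul_choose_lt (M K y x : ℕ) (hMK : M < K) (hyx : y < x)
    (hyM : y ≤ M) (hxK : x ≤ K) :
    M.choose x * K.choose y < M.choose y * K.choose x := by
  by_cases hxM : x ≤ M
  · obtain ⟨x', rfl⟩ : ∃ x', x = x' + 1 := ⟨x - 1, by omega⟩
    have hyx' : y ≤ x' := by omega
    have h1 : M.choose (x'+1) * (x'+1) = M.choose x' * (M - x') := Nat.choose_succ_right_eq M x'
    have h2 : K.choose (x'+1) * (x'+1) = K.choose x' * (K - x') := Nat.choose_succ_right_eq K x'
    have hpos : 0 < M.choose y * K.choose x' :=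
      Nat.mul_pos (Nat.choose_pos hyM) (Nat.choose_pos (by omega))
    have key : M.choose (x'+1) * K.choose y * (x'+1) < M.choose y * K.choose (x'+1) * (x'+1) := by
      calc M.choose (x'+1) * K.choose y * (x'+1)
          = (M.choose (x'+1) * (x'+1)) * K.choose y := by ring
        _ = M.choose x' * (M - x') * K.choose y := by rw [h1]
        _ = (M.choose x' * K.choose y) * (M - x') := by ring
        _ ≤ (M.choose y * K.choose x') * (M - x') :=
            Nat.mul_le_mul_right _ (choose_mul_choose_le M K y (le_of_lt hMK) x' hyx')
        _ < (M.choose y * K.choose x') * (K - x') :=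
            mul_lt_mul_of_pos_left (by omega) hpos
        _ = M.choose y * (K.choose x' * (K - x')) := by ring
        _ = M.choose y * (K.choose (x'+1) * (x'+1)) := by rw [h2]
        _ = M.choose y * K.choose (x'+1) * (x'+1) := by ring
    exact Nat.lt_of_mul_lt_mul_right key
  · have h0 : M.choose x = 0 := Nat.choose_eq_zero_of_lt (by omega)
    have hpos : 0 < M.choose y * K.choose x :=
      Nat.mul_pos (Nat.choose_pos hyM) (Nat.choose_pos hxK)
    simpa [h0] using hpos

lemma hyper_le (M n N x : ℕ) (hnN : n ≤ N) (hM : 2 * M < N) (hx : x ≤ n)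
    (h2x : n < 2 * x) :
    hyperPMF M n N x ≤ hyperPMF M n N (n - x) := by
  have hnx : n - x ≤ n := Nat.sub_le n x
  have hnn : n - (n - x) = x := by omega
  rw [hyperPMF, hyperPMF, if_pos hx, if_pos hnx, hnn]
  have hden : (0:ℚ) < N.choose n := by exact_mod_cast Nat.choose_pos hnN
  have hnat : M.choose x * (N - M).choose (n - x) ≤ M.choose (n - x) * (N - M).choose x :=
    choose_mul_choose_le M (N - M) (n - x) (by omega) x (by omega)
  rw [div_le_div_iff₀ hden hden]
  exact mul_le_mul_of_nonneg_right (by exact_mod_cast hnat) (le_of_lt hden)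

lemma hyper_lt (M n N x : ℕ) (hnN : n ≤ N) (hM : 2 * M < N) (hx : x ≤ n)
    (h2x : n < 2 * x) (hp : 0 < hyperPMF M n N x) :
    hyperPMF M n N x < hyperPMF M n N (n - x) := by
  have hnx : n - x ≤ n := Nat.sub_le n x
  have hnn : n - (n - x) = x := by omega
  rw [hyperPMF] at hp
  rw [if_pos hx] at hp
  have hden : (0:ℚ) < N.choose n := by exact_mod_cast Nat.choose_pos hnN
  have hnum : (0:ℚ) < (M.choose x * (N - M).choose (n - x) : ℚ) := by
    by_contra h
    push_neg at h
    have : (M.choose x * (N - M).choose (n - x) : ℚ) / (N.choose n) ≤ 0 :=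
      div_nonpos_of_nonpos_of_nonneg h (le_of_lt hden)
    linarith
  have hnum' : 0 < M.choose x * (N - M).choose (n - x) := by exact_mod_cast hnum
  have hxM : x ≤ M := by
    by_contra h
    rw [Nat.choose_eq_zero_of_lt (by omega)] at hnum'
    simp at hnum'
  have hnxNM : n - x ≤ N - M := by
    by_contra h
    rw [Nat.choose_eq_zero_of_lt (show N - M < n - x by omega)] at hnum'
    simp at hnum'
  rw [hyperPMF, hyperPMF, if_pos hx, if_pos hnx, hnn]
  have hnat : M.choose x * (N - M).choose (n - x) < M.choose (n - x) * (N - M).choose x :=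
    choose_mul_choose_lt M (N - M) (n - x) x (by omega) (by omega) (by omega) (by omega)
  rw [div_lt_div_iff₀ hden hden]
  exact mul_lt_mul_of_pos_right (by exact_mod_cast hnat) hden

/-- If {[a_M, b_M] : M ∈ [0, ⌊N/2⌋]} are α max optimal acceptance intervals, then
a_M + b_M ≤ n for every M < N/2. -/
theorem alphaMaxOpt_sum_le (n N : ℕ) (α : ℚ) (hn : 0 < n) (hnN : n ≤ N)
    (hα0 : 0 < α) (hα1 : α < 1) (a b : ℕ → ℕ)
    (hopt : ∀ M ≤ N / 2, AlphaMaxOpt n N α M (a M) (b M)) :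
    ∀ M : ℕ, 2 * M < N → a M + b M ≤ n := by
  intro M hM
  have hMle : M ≤ N / 2 := by omega
  obtain ⟨hab, hbn, hcov, hmin, hpos, hmax⟩ := hopt M hMle
  by_contra hcon
  push_neg at hcon
  have ha1 : 1 ≤ a M := by omega
  set e := max (a M) (n - a M + 1) with he
  have he1 : a M ≤ e := le_max_left _ _
  have he2 : n - a M + 1 ≤ e := le_max_right _ _
  have he3 : e = a M ∨ e = n - a M + 1 := max_choice _ _
  have heb : e ≤ b M := by omega
  set T := Finset.Icc (n - b M) (n - a M) with hT
  have hTsub : T ⊆ Finset.range (n + 1) := by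
    intro x hx
    rw [hT, Finset.mem_Icc] at hx
    rw [Finset.mem_range]
    omega
  have hTcard : T.card = b M - a M + 1 := by
    rw [hT, Nat.card_Icc]; omega
  have hle := hmax T hTsub hTcard
  -- set differences
  have hsd1 : Finset.Icc (a M) (b M) \ T = Finset.Icc e (b M) := by
    ext x
    rw [Finset.mem_sdiff, hT, Finset.mem_Icc, Finset.mem_Icc, Finset.mem_Icc]
    omega
  have hsd2 : T \ Finset.Icc (a M) (b M) = Finset.Icc (n - b M) (n - e) := by
    ext x
    rw [Finset.mem_sdiff, hT, Finset.mem_Icc, Finset.mem_Icc, Finset.mem_Icc]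
    omega
  -- reindex the reflected tail
  have hre : ∑ x ∈ Finset.Icc (n - b M) (n - e), hyperPMF M n N x
      = ∑ x ∈ Finset.Icc e (b M), hyperPMF M n N (n - x) := by
    refine (Finset.sum_nbij' (fun x => n - x) (fun x => n - x) ?_ ?_ ?_ ?_ ?_).symm
    · intro x hx
      simp only [Finset.mem_Icc] at hx ⊢
      omega
    · intro x hx
      simp only [Finset.mem_Icc] at hx ⊢
      omega
    · intro x hx
      simp only [Finset.mem_Icc] at hx
      omega
    · intro x hx
      simp only [Finset.mem_Icc] at hx
      omega
    · intro x hx; rfl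
  -- strict inequality on tails
  have htail : ∑ x ∈ Finset.Icc e (b M), hyperPMF M n N x
      < ∑ x ∈ Finset.Icc (n - b M) (n - e), hyperPMF M n N x := by
    rw [hre]
    refine Finset.sum_lt_sum ?_ ⟨b M, Finset.mem_Icc.mpr ⟨heb, le_refl _⟩, ?_⟩
    · intro x hx
      rw [Finset.mem_Icc] at hx
      exact hyper_le M n N x hnN hM (by omega) (by omega)
    · exact hyper_lt M n N (b M) hnN hM hbn (by omega)
        (hpos (b M) (Finset.mem_Icc.mpr ⟨hab, le_refl _⟩))
  -- assemble
  have h1 := Finset.sum_inter_add_sum_sdiff (Finset.Icc (a M) (b M)) T (hyperPMF M n N)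
  have h2 := Finset.sum_inter_add_sum_sdiff T (Finset.Icc (a M) (b M)) (hyperPMF M n N)
  rw [hsd1] at h1
  rw [hsd2, Finset.inter_comm] at h2
  have : ∑ x ∈ Finset.Icc (a M) (b M), hyperPMF M n N x < ∑ x ∈ T, hyperPMF M n N x := by
    rw [← h1, ← h2]
    linarith
  linarith
end

section
/- Let N be even and let A ⊆ [0, n] be a nonempty symmetric set (x ∈ A implies n − x ∈ A). Then there exists an integer c ∈ [0, n] with P_{N/2}([c, n−c]) ≥ P_{N/2}(A), where the length satisfies n − 2c + 1 = |A| if n or |A| is odd, and n − 2c + 1 = |A| + 1 if both n and |A| are even. -/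
/-!
`P = P_{N/2} = hyperPMF K n (2K)` is symmetric about `n/2` and increasing on `[0, n/2]`, because
`x ↦ C(K, x) C(K, n - x)` is. Hence with `c ≤ n/2` we have `P ≥ P c` on `[c, n - c]` and
`P ≤ P c` outside it, so any `A` with `|A| ≤ n - 2c + 1` loses mass by trading its points outside
the interval for as many points of the interval that it misses. The length constraint is met by
`c = (n + 1 - |A|) / 2`: when `n` is odd, `x ↦ n - x` has no fixed point, so `|A|` is even.
-/

open Finset

namespace Finset

theorem sum_le_sum_of_card_le_of_le_of_le {ι M : Type*} [DecidableEq ι] [AddCommMonoid M]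
    [PartialOrder M] [IsOrderedAddMonoid M] {s t : Finset ι} {f : ι → M} {a : M}
    (ha : 0 ≤ a) (hcard : #s ≤ #t) (hs : ∀ i ∈ s, i ∉ t → f i ≤ a)
    (ht : ∀ i ∈ t, a ≤ f i) : ∑ i ∈ s, f i ≤ ∑ i ∈ t, f i := by
  have hsdiff : #(s \ t) ≤ #(t \ s) := card_sdiff_le_card_sdiff_iff.mpr hcard
  calc ∑ i ∈ s, f i = ∑ i ∈ s ∩ t, f i + ∑ i ∈ s \ t, f i := (sum_inter_add_sum_sdiff s t f).symm
    _ ≤ ∑ i ∈ t ∩ s, f i + #(t \ s) • a := by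
        rw [inter_comm]
        gcongr
        exact (sum_le_card_nsmul _ _ _ fun i hi ↦ hs i (mem_sdiff.1 hi).1 (mem_sdiff.1 hi).2).trans
          (nsmul_le_nsmul_left ha hsdiff)
    _ ≤ ∑ i ∈ t ∩ s, f i + ∑ i ∈ t \ s, f i := by
        gcongr
        exact card_nsmul_le_sum _ _ _ fun i hi ↦ ht i (mem_sdiff.1 hi).1
    _ = ∑ i ∈ t, f i := sum_inter_add_sum_sdiff t s f

theorem even_card_of_involution {ι : Type*} {s : Finset ι} (g : ∀ a ∈ s, ι)
    (hg_ne : ∀ a ha, g a ha ≠ a) (g_mem : ∀ a ha, g a ha ∈ s)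
    (hg_invol : ∀ a ha, g (g a ha) (g_mem a ha) = a) : Even #s := by
  rw [← ZMod.natCast_eq_zero_iff_even, card_eq_sum_ones, Nat.cast_sum, Nat.cast_one]
  exact sum_involution g (fun _ _ ↦ by decide) (fun a ha _ ↦ hg_ne a ha) g_mem hg_invol

end Finset

namespace Nat

theorem choose_mul_choose_succ_le_of_le (K : ℕ) {x s : ℕ} (hxs : x ≤ s) :
    K.choose x * K.choose (s + 1) ≤ K.choose (x + 1) * K.choose s := by
  have key : (K - s) * (x + 1) ≤ (K - x) * (s + 1) :=
    Nat.mul_le_mul (Nat.sub_le_sub_left hxs K) (by omega)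
  refine Nat.le_of_mul_le_mul_right (c := (x + 1) * (s + 1)) ?_ (by positivity)
  calc K.choose x * K.choose (s + 1) * ((x + 1) * (s + 1))
      = K.choose x * (K.choose (s + 1) * (s + 1)) * (x + 1) := by ring
    _ = K.choose x * K.choose s * ((K - s) * (x + 1)) := by rw [choose_succ_right_eq]; ring
    _ ≤ K.choose x * K.choose s * ((K - x) * (s + 1)) := Nat.mul_le_mul_left _ key
    _ = K.choose x * (K - x) * K.choose s * (s + 1) := by ring
    _ = K.choose (x + 1) * K.choose s * ((x + 1) * (s + 1)) := by rw [← choose_succ_right_eq]; ring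

theorem monotoneOn_choose_mul_choose_sub (K n : ℕ) :
    MonotoneOn (fun x ↦ K.choose x * K.choose (n - x)) (Set.Iic (n / 2)) := by
  refine monotoneOn_of_le_add_one Set.ordConnected_Iic fun a _ _ ha ↦ ?_
  rw [Set.mem_Iic] at ha
  rw [show n - a = n - (a + 1) + 1 by omega]
  exact choose_mul_choose_succ_le_of_le K (by omega)

end Nat

theorem hyperPMF_nonneg (M n N x : ℕ) : 0 ≤ hyperPMF M n N x := by
  unfold hyperPMF
  split <;> positivity

section HalfHypergeometric

variable {K n : ℕ}

theorem hyperPMF_half_of_le {x : ℕ} (hx : x ≤ n) :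
    hyperPMF K n (2 * K) x = (K.choose x * K.choose (n - x) : ℚ) / (2 * K).choose n := by
  rw [hyperPMF, if_pos hx, two_mul, Nat.add_sub_cancel]

theorem hyperPMF_half_sub {x : ℕ} (hx : x ≤ n) :
    hyperPMF K n (2 * K) (n - x) = hyperPMF K n (2 * K) x := by
  rw [hyperPMF_half_of_le hx, hyperPMF_half_of_le (Nat.sub_le n x), Nat.sub_sub_self hx, mul_comm]

theorem hyperPMF_half_min {x : ℕ} (hx : x ≤ n) :
    hyperPMF K n (2 * K) (min x (n - x)) = hyperPMF K n (2 * K) x := by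
  rcases min_cases x (n - x) with ⟨h, _⟩ | ⟨h, _⟩ <;> rw [h]
  exact hyperPMF_half_sub hx

theorem hyperPMF_half_le_of_le {x y : ℕ} (hxy : x ≤ y) (hy : 2 * y ≤ n) :
    hyperPMF K n (2 * K) x ≤ hyperPMF K n (2 * K) y := by
  rw [hyperPMF_half_of_le (by omega), hyperPMF_half_of_le (by omega)]
  gcongr ?_ / _
  exact_mod_cast Nat.monotoneOn_choose_mul_choose_sub K n (Set.mem_Iic.2 (by omega))
    (Set.mem_Iic.2 (by omega)) hxy

theorem hyperPMF_half_le_of_min_le {x y : ℕ} (hx : x ≤ n) (hy : y ≤ n)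
    (h : min x (n - x) ≤ min y (n - y)) :
    hyperPMF K n (2 * K) x ≤ hyperPMF K n (2 * K) y := by
  rw [← hyperPMF_half_min hx, ← hyperPMF_half_min hy]
  exact hyperPMF_half_le_of_le h (by omega)

theorem sum_hyperPMF_half_le_sum_Icc {c : ℕ} (hc : 2 * c ≤ n) {A : Finset ℕ}
    (hA : A ⊆ range (n + 1)) (hcard : #A ≤ n + 1 - 2 * c) :
    ∑ x ∈ A, hyperPMF K n (2 * K) x ≤ ∑ x ∈ Icc c (n - c), hyperPMF K n (2 * K) x := by
  refine sum_le_sum_of_card_le_of_le_of_le (hyperPMF_nonneg K n (2 * K) c) ?_ (fun x hxA hxI ↦ ?_)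
    fun y hy ↦ ?_
  · rw [Nat.card_Icc]
    omega
  · have hx := mem_range_succ_iff.1 (hA hxA)
    rw [mem_Icc] at hxI
    exact hyperPMF_half_le_of_min_le hx (by omega) (by omega)
  · rw [mem_Icc] at hy
    exact hyperPMF_half_le_of_min_le (by omega) (by omega) (by omega)

end HalfHypergeometric

theorem even_card_of_odd_of_sub_mem {n : ℕ} (hn : Odd n) {A : Finset ℕ} (hA : A ⊆ range (n + 1))
    (hsym : ∀ x ∈ A, n - x ∈ A) : Even #A := by
  have hle : ∀ x ∈ A, x ≤ n := fun x hx ↦ mem_range_succ_iff.1 (hA hx)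
  obtain ⟨k, rfl⟩ := hn
  exact even_card_of_involution (fun x _ ↦ 2 * k + 1 - x) (fun x hx ↦ by have := hle x hx; omega)
    hsym fun x hx ↦ by have := hle x hx; omega

theorem symmetric_interval_domination_general (n K : ℕ)
    (A : Finset ℕ) (hA : A ⊆ Finset.range (n + 1)) (hne : A.Nonempty)
    (hsym : ∀ x ∈ A, n - x ∈ A) :
    ∃ c : ℕ, c ≤ n ∧
      ((∑ x ∈ A, hyperPMF K n (2 * K) x)
        ≤ ∑ x ∈ Finset.Icc c (n - c), hyperPMF K n (2 * K) x) ∧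
      ((Odd n ∨ Odd A.card) → (n : ℤ) - 2 * c + 1 = A.card) ∧
      ((Even n ∧ Even A.card) → (n : ℤ) - 2 * c + 1 = A.card + 1) := by
  have hcard : #A ≤ n + 1 := by simpa using card_le_card hA
  have hpos : 0 < #A := hne.card_pos
  have hpar : Odd n → Even #A := fun hn ↦ even_card_of_odd_of_sub_mem hn hA hsym
  refine ⟨(n + 1 - #A) / 2, by omega, sum_hyperPMF_half_le_sum_Icc (by omega) hA (by omega),
    fun h ↦ ?_, fun h ↦ ?_⟩ <;>
  simp only [Nat.odd_iff, Nat.even_iff] at h hpar <;> omega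

/-- For N = 2K even and a nonempty symmetric A ⊆ [0,n], there is c ∈ [0,n] with
P_{N/2}([c, n−c]) ≥ P_{N/2}(A), where n − 2c + 1 = |A| if n or |A| is odd, and
n − 2c + 1 = |A| + 1 if both n and |A| are even. -/
theorem symmetric_interval_domination (n K : ℕ) (hn : 0 < n) (hnN : n ≤ 2 * K)
    (A : Finset ℕ) (hA : A ⊆ Finset.range (n + 1)) (hne : A.Nonempty)
    (hsym : ∀ x ∈ A, n - x ∈ A) :
    ∃ c : ℕ, c ≤ n ∧
      ((∑ x ∈ A, hyperPMF K n (2 * K) x)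
        ≤ ∑ x ∈ Finset.Icc c (n - c), hyperPMF K n (2 * K) x) ∧
      ((Odd n ∨ Odd A.card) → (n : ℤ) - 2 * c + 1 = A.card) ∧
      ((Even n ∧ Even A.card) → (n : ℤ) - 2 * c + 1 = A.card + 1) :=
  symmetric_interval_domination_general n K A hA hne hsym
end
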